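/- (Existence of optimal gain-scaling L*.) Fix d ∈ (−1,1), β > 0 and α₁, α₂, ã > 0, and suppose that ã·(α₁·μ(z₁,z₂) − (α₂/α₁)·η(z₁,z₂)) > α₁²·z₂² for every (z₁,z₂) ∈ ℝ²∖{(0,0)}. For L > 0 define G(L) := inf {γ ∈ ℝ : γ > 0 and Ĵ(z₁,z₂,ν,δ; γ, L) < 0 for all (z₁,z₂,ν,δ) ∈ ℝ⁴∖{(0,0,0,0)}}. Then there exists an optimal gain-scaling L* > 0 that globally minimizes G, i.e. G(L*) ≤ G(L) for all L > 0. -/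

import Mathlib

/-- Sign-preserving power `⌊x⌉^p = sign(x)·|x|^p`. -/
noncomputable def spow (x p : ℝ) : ℝ := Real.sign x * |x| ^ p

/-- The value function `Ĵ(z₁,z₂,ν,δ; γ, L)` of the homogeneous differential
dissipation inequality for the second-order homogeneous differentiator. -/
noncomputable def Jhat (d β α1 α2 a L γ z1 z2 ν δ : ℝ) : ℝ :=
  a * (-α1 * (spow z1 (1/(1-d)) - z2) * (spow (z1 + ν) (1/(1-d)) - z2)
        + (-z1 + (1 + β) * spow z2 (1 - d)) *
            (-(α2 / α1) * spow (z1 + ν) ((1+d)/(1-d)) + δ / (L ^ 2 * α1)))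
    + α1 ^ 2 * z2 ^ 2 - (γ / L) ^ 2 * (|ν| ^ (2/(1-d)) + |δ| ^ (2/(1+d)))

/-- `μ(z)` of the Lyapunov derivative. -/
noncomputable def muF (d z1 z2 : ℝ) : ℝ := |spow z1 (1/(1-d)) - z2| ^ (2:ℝ)

/-- `η(z)` of the Lyapunov derivative. -/
noncomputable def etaF (d β z1 z2 : ℝ) : ℝ :=
  (1 + β) * (z1 - spow z2 (1 - d)) * spow z1 ((1+d)/(1-d)) - β * |z1| ^ (2/(1-d))

/-- `G(L)`: the infimum of certified gains for gain-scaling `L`. -/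
noncomputable def Gest (d β α1 α2 a L : ℝ) : ℝ :=
  sInf {γ : ℝ | 0 < γ ∧ ∀ z1 z2 ν δ : ℝ,
    (z1, z2, ν, δ) ≠ ((0:ℝ), (0:ℝ), (0:ℝ), (0:ℝ)) →
    Jhat d β α1 α2 a L γ z1 z2 ν δ < 0}

/-!
Multiplying `Ĵ` by `L²` and writing `u = L²`, the condition `Ĵ < 0` becomes
`u · K(s) + D(s) < γ² · N(s)` (`K = coreValue`, `D = crossValue`, `N = disturbanceWeight`),
which is affine in `(u, γ²)`. Hence the least admissible `γ²`, `φ(u)` (`gainSqBound`), is a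
convex function of `u > 0`, and `G(L) = √φ(L²)`. The admissible set is nonempty: `K`, `D`, `N` are
homogeneous of degree two under the weighted dilation, so it suffices to dominate `u K + D` by a
multiple of `N` on the compact unit sphere of a homogeneous norm, and where `N` vanishes there the
strict feasibility hypothesis makes `u K + D` negative. Two explicit test points give
`φ(u) ≥ κ u` and `φ(u) ≥ κ' u^(1 - 2/(1+d))`, so `φ` blows up at both ends of `(0, ∞)`; being
convex it is continuous, and therefore attains its minimum.
-/

open Set Filter Topology Pointwise

lemma rpow_rpow_div {c : ℝ} (hc : 0 ≤ c) {r : ℝ} (hr : r ≠ 0) (p : ℝ) :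
    (c ^ r) ^ (p / r) = c ^ p := by
  rw [← Real.rpow_mul hc, mul_div_cancel₀ p hr]

lemma abs_mul_rpow_of_pos {c : ℝ} (hc : 0 < c) (x p : ℝ) : |c * x| ^ p = c ^ p * |x| ^ p := by
  rw [abs_mul, abs_of_pos hc, Real.mul_rpow hc.le (abs_nonneg x)]

lemma abs_rpow_eq_zero_iff {p : ℝ} (hp : p ≠ 0) {x : ℝ} : |x| ^ p = 0 ↔ x = 0 := by
  simp [Real.rpow_eq_zero_iff_of_nonneg (abs_nonneg x), hp]

lemma abs_le_one_of_abs_rpow_le_one {p : ℝ} (hp : 0 < p) {x : ℝ} (h : |x| ^ p ≤ 1) : |x| ≤ 1 :=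
  (Real.rpow_le_rpow_iff (abs_nonneg x) zero_le_one hp).1 (by rwa [Real.one_rpow])

@[simp] lemma zero_spow (p : ℝ) : spow 0 p = 0 := by simp [spow]

@[simp] lemma one_spow (p : ℝ) : spow 1 p = 1 := by simp [spow]

@[simp] lemma neg_one_spow (p : ℝ) : spow (-1) p = -1 := by
  simp [spow, Real.sign_of_neg (neg_one_lt_zero : (-1 : ℝ) < 0)]

lemma spow_of_pos {x : ℝ} (hx : 0 < x) (p : ℝ) : spow x p = x ^ p := by
  simp [spow, Real.sign_of_pos hx, abs_of_pos hx]

lemma mul_spow_of_pos {c : ℝ} (hc : 0 < c) (x p : ℝ) : spow (c * x) p = c ^ p * spow x p := by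
  have hsign : Real.sign (c * x) = Real.sign x := by
    rcases lt_trichotomy x 0 with hx | rfl | hx
    · rw [Real.sign_of_neg hx, Real.sign_of_neg (mul_neg_of_pos_of_neg hc hx)]
    · simp
    · rw [Real.sign_of_pos hx, Real.sign_of_pos (mul_pos hc hx)]
  rw [spow, spow, hsign, abs_mul, abs_of_pos hc, Real.mul_rpow hc.le (abs_nonneg x)]
  ring

lemma self_mul_spow (x : ℝ) {p : ℝ} (hp : p + 1 ≠ 0) : x * spow x p = |x| ^ (p + 1) := by
  rcases eq_or_ne x 0 with rfl | hx
  · simp [Real.zero_rpow hp]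
  · have hsign : x * Real.sign x = |x| := by
      rcases hx.lt_or_gt with hx | hx
      · rw [Real.sign_of_neg hx, abs_of_neg hx, mul_neg_one]
      · rw [Real.sign_of_pos hx, abs_of_pos hx, mul_one]
    rw [spow, ← mul_assoc, hsign, Real.rpow_add (abs_pos.2 hx), Real.rpow_one, mul_comm]

lemma spow_eq_sub_rpow {p : ℝ} (hp : p ≠ 0) (x : ℝ) :
    spow x p = max x 0 ^ p - max (-x) 0 ^ p := by
  rcases lt_trichotomy x 0 with hx | rfl | hx
  · simp [spow, Real.sign_of_neg hx, abs_of_neg hx, hx.le, Real.zero_rpow hp]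
  · simp
  · simp [spow, Real.sign_of_pos hx, abs_of_pos hx, hx.le, Real.zero_rpow hp]

@[fun_prop]
lemma Continuous.spow {X : Type*} [TopologicalSpace X] {f : X → ℝ} (hf : Continuous f)
    {p : ℝ} (hp : 0 < p) : Continuous fun x => spow (f x) p := by
  simp_rw [spow_eq_sub_rpow hp.ne']
  fun_prop (disch := exact hp.le)


lemma sInf_setOf_sq_mem {W : Set ℝ} (hW : W ⊆ Ioi 0) (hne : W.Nonempty) :
    sInf {γ : ℝ | 0 < γ ∧ γ ^ 2 ∈ W} = √(sInf W) := by
  have himage : {γ : ℝ | 0 < γ ∧ γ ^ 2 ∈ W} = Real.sqrt '' W := by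
    ext γ
    constructor
    · rintro ⟨hγ, hγW⟩
      exact ⟨γ ^ 2, hγW, Real.sqrt_sq hγ.le⟩
    · rintro ⟨v, hv, rfl⟩
      exact ⟨Real.sqrt_pos.2 (hW hv), by rwa [Real.sq_sqrt (hW hv).le]⟩
  rw [himage]
  exact (Monotone.map_csInf_of_continuousAt (Real.continuous_sqrt.continuousAt)
    (fun _ _ h => Real.sqrt_le_sqrt h) hne ⟨0, fun v hv => (hW hv).le⟩).symm

lemma exists_lt_mul_of_isCompact {X : Type*} [TopologicalSpace X] {K : Set X}
    (hK : IsCompact K) {f N : X → ℝ} (hf : Continuous f) (hN : Continuous N)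
    (hN₀ : ∀ x ∈ K, 0 ≤ N x) (hneg : ∀ x ∈ K, N x = 0 → f x < 0) :
    ∃ v > 0, ∀ x ∈ K, f x < v * N x := by
  set T := K ∩ {x | 0 ≤ f x}
  have hNT : ∀ x ∈ T, 0 < N x := fun x hx =>
    (hN₀ x hx.1).lt_of_ne fun h => (hneg x hx.1 h.symm).not_ge hx.2
  obtain ⟨b, hb⟩ := (hK.inter_right (isClosed_le continuous_const hf)).bddAbove_image
    (hf.continuousOn.div hN.continuousOn fun x hx => (hNT x hx).ne')
  refine ⟨max b 0 + 1, by positivity, fun x hx => ?_⟩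
  by_cases hfx : 0 ≤ f x
  · have hxT : x ∈ T := ⟨hx, hfx⟩
    have h := hb ⟨x, hxT, rfl⟩
    rw [Pi.div_apply, div_le_iff₀ (hNT x hxT)] at h
    nlinarith [le_max_left b 0, hNT x hxT]
  · nlinarith [hN₀ x hx, le_max_right b 0]

lemma exists_isMinOn_Ioi_of_tendsto {f : ℝ → ℝ} (hf : ContinuousOn f (Ioi 0))
    (h₀ : Tendsto f (𝓝[>] 0) atTop) (htop : Tendsto f atTop atTop) :
    ∃ x ∈ Ioi 0, IsMinOn f (Ioi 0) x := by
  obtain ⟨lo, hlo, hsmall⟩ := mem_nhdsGT_iff_exists_Ioo_subset.1 (h₀.eventually_ge_atTop (f 1))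
  obtain ⟨hi, hlarge⟩ := eventually_atTop.1 (htop.eventually_ge_atTop (f 1))
  have hK : Icc (min lo 1) (max hi 1) ⊆ Ioi 0 := fun x hx =>
    (lt_min (mem_Ioi.1 hlo) one_pos).trans_le hx.1
  obtain ⟨x, hxK, hmin⟩ := isCompact_Icc.exists_isMinOn
    ⟨1, min_le_right _ _, le_max_right _ _⟩ (hf.mono hK)
  refine ⟨x, hK hxK, fun y (hy : 0 < y) => ?_⟩
  have hx1 : f x ≤ f 1 := hmin ⟨min_le_right _ _, le_max_right _ _⟩
  by_cases hyK : y ∈ Icc (min lo 1) (max hi 1)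
  · exact hmin hyK
  · rcases not_and_or.1 hyK with hy' | hy'
    · exact hx1.trans (hsmall ⟨hy, (not_le.1 hy').trans_le (min_le_left _ _)⟩)
    · exact hx1.trans (hlarge y ((le_max_left _ _).trans (not_le.1 hy').le))

section FeasibleGains

variable {ι : Type*} (S : Set ι) (A B C : ι → ℝ)

def feasibleGains (u : ℝ) : Set ℝ := {v | 0 < v ∧ ∀ i ∈ S, u * A i + B i < v * C i}

variable {S A B C}

lemma feasibleGains_subset_Ioi (u : ℝ) : feasibleGains S A B C u ⊆ Ioi 0 := fun _ hv => hv.1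

lemma smul_add_smul_feasibleGains_subset {u₁ u₂ θ₁ θ₂ : ℝ} (hθ₁ : 0 ≤ θ₁) (hθ₂ : 0 ≤ θ₂)
    (hθ : θ₁ + θ₂ = 1) :
    θ₁ • feasibleGains S A B C u₁ + θ₂ • feasibleGains S A B C u₂ ⊆
      feasibleGains S A B C (θ₁ * u₁ + θ₂ * u₂) := by
  rintro _ ⟨_, ⟨v₁, hv₁, rfl⟩, _, ⟨v₂, hv₂, rfl⟩, rfl⟩
  simp only [smul_eq_mul]
  rcases hθ₁.eq_or_lt with rfl | hθ₁'
  · simp only [zero_add] at hθ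
    subst hθ
    simpa using hv₂
  · refine ⟨by nlinarith [hv₁.1, hv₂.1], fun i hi => ?_⟩
    have hB : B i = θ₁ * B i + θ₂ * B i := by rw [← add_mul, hθ, one_mul]
    linarith [mul_lt_mul_of_pos_left (hv₁.2 i hi) hθ₁',
      mul_le_mul_of_nonneg_left (hv₂.2 i hi).le hθ₂]

lemma convexOn_sInf_feasibleGains {s : Set ℝ} (hs : Convex ℝ s)
    (hne : ∀ u ∈ s, (feasibleGains S A B C u).Nonempty) :
    ConvexOn ℝ s fun u => sInf (feasibleGains S A B C u) := by
  refine ⟨hs, fun u₁ hu₁ u₂ hu₂ θ₁ θ₂ hθ₁ hθ₂ hθ => ?_⟩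
  have hbdd : ∀ u θ : ℝ, 0 ≤ θ → BddBelow (θ • feasibleGains S A B C u) := fun u θ hθ =>
    ⟨0, by rintro _ ⟨v, hv, rfl⟩; exact smul_nonneg hθ hv.1.le⟩
  simp only [smul_eq_mul]
  calc sInf (feasibleGains S A B C (θ₁ * u₁ + θ₂ * u₂))
      ≤ sInf (θ₁ • feasibleGains S A B C u₁ + θ₂ • feasibleGains S A B C u₂) :=
        csInf_le_csInf ⟨0, fun _ hv => hv.1.le⟩
          (((hne u₁ hu₁).smul_set).add (hne u₂ hu₂).smul_set)
          (smul_add_smul_feasibleGains_subset hθ₁ hθ₂ hθ)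
    _ = θ₁ * sInf (feasibleGains S A B C u₁) + θ₂ * sInf (feasibleGains S A B C u₂) := by
        rw [csInf_add (hne u₁ hu₁).smul_set (hbdd u₁ θ₁ hθ₁) (hne u₂ hu₂).smul_set
          (hbdd u₂ θ₂ hθ₂), Real.sInf_smul_of_nonneg hθ₁, Real.sInf_smul_of_nonneg hθ₂,
          smul_eq_mul, smul_eq_mul]

lemma div_le_sInf_feasibleGains {u : ℝ} (hne : (feasibleGains S A B C u).Nonempty) {i : ι}
    (hi : i ∈ S) (hC : 0 < C i) : (u * A i + B i) / C i ≤ sInf (feasibleGains S A B C u) :=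
  le_csInf hne fun _ hv => (div_le_iff₀ hC).2 (hv.2 i hi).le

end FeasibleGains

noncomputable section Differentiator

variable (d β α1 α2 a : ℝ)

def coreValue (s : ℝ × ℝ × ℝ × ℝ) : ℝ :=
  a * (-α1 * (spow s.1 (1/(1-d)) - s.2.1) * (spow (s.1 + s.2.2.1) (1/(1-d)) - s.2.1)
      + (-s.1 + (1+β) * spow s.2.1 (1-d)) * (-(α2/α1) * spow (s.1 + s.2.2.1) ((1+d)/(1-d))))
    + α1 ^ 2 * s.2.1 ^ 2

def crossValue (s : ℝ × ℝ × ℝ × ℝ) : ℝ := a * (-s.1 + (1+β) * spow s.2.1 (1-d)) * s.2.2.2 / α1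

def disturbanceWeight (s : ℝ × ℝ × ℝ × ℝ) : ℝ := |s.2.2.1| ^ (2/(1-d)) + |s.2.2.2| ^ (2/(1+d))

def homNorm (s : ℝ × ℝ × ℝ × ℝ) : ℝ := |s.1| ^ (2/(1-d)) + s.2.1 ^ 2 + disturbanceWeight d s

def dilate (c : ℝ) (s : ℝ × ℝ × ℝ × ℝ) : ℝ × ℝ × ℝ × ℝ :=
  (c ^ (1-d) * s.1, c * s.2.1, c ^ (1-d) * s.2.2.1, c ^ (1+d) * s.2.2.2)

/-- The squared gains certified for `L` with `L ^ 2 = u`. -/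
def gainSqSet (u : ℝ) : Set ℝ :=
  feasibleGains {s | s ≠ 0} (coreValue d β α1 α2 a) (crossValue d β α1 a) (disturbanceWeight d) u

def gainSqBound (u : ℝ) : ℝ := sInf (gainSqSet d β α1 α2 a u)

variable {d β α1 α2 a c : ℝ}

lemma sq_mul_Jhat {L : ℝ} (hL : L ≠ 0) (γ z1 z2 ν δ : ℝ) :
    L ^ 2 * Jhat d β α1 α2 a L γ z1 z2 ν δ
      = L ^ 2 * coreValue d β α1 α2 a (z1, z2, ν, δ) + crossValue d β α1 a (z1, z2, ν, δ)
        - γ ^ 2 * disturbanceWeight d (z1, z2, ν, δ) := by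
  simp only [Jhat, coreValue, crossValue, disturbanceWeight]
  field_simp
  ring

lemma Gest_eq_sqrt_gainSqBound {L : ℝ} (hL : 0 < L)
    (hne : (gainSqSet d β α1 α2 a (L ^ 2)).Nonempty) :
    Gest d β α1 α2 a L = √(gainSqBound d β α1 α2 a (L ^ 2)) := by
  have hJ : ∀ γ z1 z2 ν δ, Jhat d β α1 α2 a L γ z1 z2 ν δ < 0 ↔
      L ^ 2 * coreValue d β α1 α2 a (z1, z2, ν, δ) + crossValue d β α1 a (z1, z2, ν, δ)
        < γ ^ 2 * disturbanceWeight d (z1, z2, ν, δ) := fun γ z1 z2 ν δ => by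
    rw [← smul_neg_iff_of_pos_left (pow_pos hL 2), smul_eq_mul, sq_mul_Jhat hL.ne', sub_neg]
  have hset : {γ : ℝ | 0 < γ ∧ ∀ z1 z2 ν δ : ℝ, (z1, z2, ν, δ) ≠ ((0:ℝ), (0:ℝ), (0:ℝ), (0:ℝ)) →
      Jhat d β α1 α2 a L γ z1 z2 ν δ < 0} =
      {γ | 0 < γ ∧ γ ^ 2 ∈ gainSqSet d β α1 α2 a (L ^ 2)} := by
    ext γ
    simp only [gainSqSet, feasibleGains, mem_ofPred_eq, Prod.forall, Prod.mk_zero_zero, hJ]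
    exact and_congr_right fun hγ => (and_iff_right (pow_pos hγ 2)).symm
  rw [Gest, hset, gainSqBound]
  exact sInf_setOf_sq_mem (feasibleGains_subset_Ioi _) hne

lemma rpow_one_sub_mul_rpow_one_add {c : ℝ} (hc : 0 < c) : c ^ (1 - d) * c ^ (1 + d) = c ^ 2 := by
  rw [← Real.rpow_add hc, sub_add_add_cancel, one_add_one_eq_two, Real.rpow_two]

lemma coreValue_dilate (hd : 1 - d ≠ 0) (hc : 0 < c) (s : ℝ × ℝ × ℝ × ℝ) :
    coreValue d β α1 α2 a (dilate d c s) = c ^ 2 * coreValue d β α1 α2 a s := by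
  obtain ⟨z1, z2, ν, δ⟩ := s
  have hc' : 0 < c ^ (1 - d) := Real.rpow_pos_of_pos hc _
  simp only [coreValue, dilate, ← mul_add]
  rw [mul_spow_of_pos hc', mul_spow_of_pos hc', mul_spow_of_pos hc', mul_spow_of_pos hc,
    rpow_rpow_div hc.le hd, rpow_rpow_div hc.le hd, Real.rpow_one]
  linear_combination (a * (-z1 + (1 + β) * spow z2 (1 - d)) *
    (-(α2 / α1) * spow (z1 + ν) ((1 + d) / (1 - d)))) * rpow_one_sub_mul_rpow_one_add hc

lemma crossValue_dilate (hc : 0 < c) (s : ℝ × ℝ × ℝ × ℝ) :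
    crossValue d β α1 a (dilate d c s) = c ^ 2 * crossValue d β α1 a s := by
  obtain ⟨z1, z2, ν, δ⟩ := s
  simp only [crossValue, dilate]
  rw [mul_spow_of_pos hc]
  linear_combination (a * (-z1 + (1 + β) * spow z2 (1 - d)) * δ / α1) *
    rpow_one_sub_mul_rpow_one_add hc

lemma disturbanceWeight_dilate (hd₁ : 1 - d ≠ 0) (hd₂ : 1 + d ≠ 0) (hc : 0 < c)
    (s : ℝ × ℝ × ℝ × ℝ) : disturbanceWeight d (dilate d c s) = c ^ 2 * disturbanceWeight d s := by
  simp only [disturbanceWeight, dilate]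
  rw [abs_mul_rpow_of_pos (Real.rpow_pos_of_pos hc _),
    abs_mul_rpow_of_pos (Real.rpow_pos_of_pos hc _), rpow_rpow_div hc.le hd₁,
    rpow_rpow_div hc.le hd₂, Real.rpow_two]
  ring

lemma homNorm_dilate (hd₁ : 1 - d ≠ 0) (hd₂ : 1 + d ≠ 0) (hc : 0 < c) (s : ℝ × ℝ × ℝ × ℝ) :
    homNorm d (dilate d c s) = c ^ 2 * homNorm d s := by
  rw [homNorm, homNorm, disturbanceWeight_dilate hd₁ hd₂ hc]
  simp only [dilate]
  rw [abs_mul_rpow_of_pos (Real.rpow_pos_of_pos hc _), rpow_rpow_div hc.le hd₁, Real.rpow_two]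
  ring

lemma continuous_coreValue (hd : d ∈ Ioo (-1 : ℝ) 1) :
    Continuous (coreValue d β α1 α2 a) := by
  have h₁ : 0 < 1 - d := by linarith [hd.2]
  have h₂ : 0 < 1 / (1 - d) := by positivity
  have h₃ : 0 < (1 + d) / (1 - d) := div_pos (by linarith [hd.1]) h₁
  unfold coreValue
  fun_prop (disch := assumption)

lemma continuous_crossValue (hd : d < 1) : Continuous (crossValue d β α1 a) := by
  have h₁ : 0 < 1 - d := by linarith
  unfold crossValue
  fun_prop (disch := assumption)

lemma continuous_disturbanceWeight (hd : d ∈ Ioo (-1 : ℝ) 1) :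
    Continuous (disturbanceWeight d) := by
  have h₁ : 0 ≤ 2 / (1 - d) := div_nonneg zero_le_two (by linarith [hd.2])
  have h₂ : 0 ≤ 2 / (1 + d) := div_nonneg zero_le_two (by linarith [hd.1])
  unfold disturbanceWeight
  fun_prop (disch := assumption)

lemma continuous_homNorm (hd : d ∈ Ioo (-1 : ℝ) 1) : Continuous (homNorm d) := by
  have h₁ : 0 ≤ 2 / (1 - d) := div_nonneg zero_le_two (by linarith [hd.2])
  have hN := continuous_disturbanceWeight hd
  unfold homNorm
  fun_prop (disch := assumption)

lemma disturbanceWeight_nonneg (s : ℝ × ℝ × ℝ × ℝ) : 0 ≤ disturbanceWeight d s := by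
  unfold disturbanceWeight; positivity

lemma disturbanceWeight_eq_zero (hd : d ∈ Ioo (-1 : ℝ) 1) {s : ℝ × ℝ × ℝ × ℝ}
    (h : disturbanceWeight d s = 0) : s.2.2.1 = 0 ∧ s.2.2.2 = 0 := by
  have h₁ : 2 / (1 - d) ≠ 0 := div_ne_zero two_ne_zero (by linarith [hd.2])
  have h₂ : 2 / (1 + d) ≠ 0 := div_ne_zero two_ne_zero (by linarith [hd.1])
  rwa [disturbanceWeight, add_eq_zero_iff_of_nonneg (by positivity) (by positivity),
    abs_rpow_eq_zero_iff h₁, abs_rpow_eq_zero_iff h₂] at h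

lemma homNorm_pos (hd : d ∈ Ioo (-1 : ℝ) 1) {s : ℝ × ℝ × ℝ × ℝ} (hs : s ≠ 0) : 0 < homNorm d s := by
  have h₁ : 2 / (1 - d) ≠ 0 := div_ne_zero two_ne_zero (by linarith [hd.2])
  have hN := disturbanceWeight_nonneg (d := d) s
  refine (by unfold homNorm; positivity : 0 ≤ homNorm d s).lt_of_ne fun h => hs ?_
  rw [eq_comm, homNorm, add_eq_zero_iff_of_nonneg (by positivity) hN,
    add_eq_zero_iff_of_nonneg (by positivity) (sq_nonneg _), abs_rpow_eq_zero_iff h₁,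
    sq_eq_zero_iff] at h
  obtain ⟨⟨h1, h2⟩, hN0⟩ := h
  obtain ⟨h3, h4⟩ := disturbanceWeight_eq_zero hd hN0
  exact Prod.ext h1 (Prod.ext h2 (Prod.ext h3 h4))

lemma isCompact_homNorm_eq_one (hd : d ∈ Ioo (-1 : ℝ) 1) : IsCompact {s | homNorm d s = 1} := by
  have h₁ : 0 < 2 / (1 - d) := div_pos two_pos (by linarith [hd.2])
  have h₂ : 0 < 2 / (1 + d) := div_pos two_pos (by linarith [hd.1])
  have hI : IsCompact (Icc (-1 : ℝ) 1) := isCompact_Icc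
  refine (hI.prod (hI.prod (hI.prod hI))).of_isClosed_subset
    (isClosed_eq (continuous_homNorm hd) continuous_const) ?_
  rintro ⟨z1, z2, ν, δ⟩ (h : homNorm d _ = 1)
  simp only [homNorm, disturbanceWeight] at h
  have t1 : 0 ≤ |z1| ^ (2 / (1 - d)) := by positivity
  have t3 : 0 ≤ |ν| ^ (2 / (1 - d)) := by positivity
  have t4 : 0 ≤ |δ| ^ (2 / (1 + d)) := by positivity
  simp only [mem_prod, mem_Icc, ← abs_le]
  exact ⟨abs_le_one_of_abs_rpow_le_one h₁ (by linarith [sq_nonneg z2]),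
    (sq_le_one_iff_abs_le_one z2).1 (by linarith),
    abs_le_one_of_abs_rpow_le_one h₁ (by linarith [sq_nonneg z2]),
    abs_le_one_of_abs_rpow_le_one h₂ (by linarith [sq_nonneg z2])⟩

lemma coreValue_zero_disturbance (hd : 1 - d ≠ 0) (z1 z2 : ℝ) :
    coreValue d β α1 α2 a (z1, z2, 0, 0)
      = α1 ^ 2 * z2 ^ 2 - a * (α1 * muF d z1 z2 - (α2 / α1) * etaF d β z1 z2) := by
  have hp : (1 + d) / (1 - d) + 1 = 2 / (1 - d) := by field_simp; ring
  have h := self_mul_spow z1 (p := (1 + d) / (1 - d)) (by rw [hp]; exact div_ne_zero two_ne_zero hd)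
  rw [hp] at h
  simp only [coreValue, etaF, muF, add_zero, Real.rpow_two, sq_abs]
  linear_combination (-(a * (α2 / α1) * β)) * h

lemma gainSqSet_nonempty (hd : d ∈ Ioo (-1 : ℝ) 1)
    (hSF : ∀ z1 z2 : ℝ, (z1, z2) ≠ ((0:ℝ), (0:ℝ)) →
      α1 ^ 2 * z2 ^ 2 < a * (α1 * muF d z1 z2 - (α2 / α1) * etaF d β z1 z2))
    {u : ℝ} (hu : 0 < u) : (gainSqSet d β α1 α2 a u).Nonempty := by
  have hd₁ : 1 - d ≠ 0 := by linarith [hd.2]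
  have hd₂ : 1 + d ≠ 0 := by linarith [hd.1]
  set f := fun s => u * coreValue d β α1 α2 a s + crossValue d β α1 a s with hf
  have hf_dilate : ∀ {c} (hc : 0 < c) s, f (dilate d c s) = c ^ 2 * f s := fun hc s => by
    simp only [hf, coreValue_dilate hd₁ hc, crossValue_dilate hc]; ring
  -- on the unit sphere, a vanishing disturbance weight forces `ν = δ = 0`, where `hSF` applies
  have hneg : ∀ s ∈ {s | homNorm d s = 1}, disturbanceWeight d s = 0 → f s < 0 := by
    rintro ⟨z1, z2, ν, δ⟩ hs hN
    obtain ⟨rfl, rfl⟩ : ν = 0 ∧ δ = 0 := disturbanceWeight_eq_zero hd hN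
    have hz : (z1, z2) ≠ ((0:ℝ), (0:ℝ)) := by
      rintro ⟨⟩
      simp [homNorm, disturbanceWeight, Real.zero_rpow (div_ne_zero two_ne_zero hd₁),
        Real.zero_rpow (div_ne_zero two_ne_zero hd₂)] at hs
    simp only [hf, crossValue, mul_zero, zero_div, add_zero, coreValue_zero_disturbance hd₁]
    nlinarith [hSF z1 z2 hz]
  have hf_cont : Continuous f :=
    (continuous_const.mul (continuous_coreValue hd)).add (continuous_crossValue hd.2)
  obtain ⟨v, hv, hvK⟩ := exists_lt_mul_of_isCompact (isCompact_homNorm_eq_one hd) hf_cont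
    (continuous_disturbanceWeight hd) (fun s _ => disturbanceWeight_nonneg s) hneg
  refine ⟨v, hv, fun s (hs : s ≠ 0) => ?_⟩
  have hρ := homNorm_pos hd hs
  set c := (√(homNorm d s))⁻¹
  have hc : 0 < c := inv_pos.2 (Real.sqrt_pos.2 hρ)
  have hc2 : c ^ 2 * homNorm d s = 1 := by
    rw [inv_pow, Real.sq_sqrt hρ.le, inv_mul_cancel₀ hρ.ne']
  have h := hvK (dilate d c s) (by rw [mem_ofPred_eq, homNorm_dilate hd₁ hd₂ hc, hc2])
  rw [hf_dilate hc, disturbanceWeight_dilate hd₁ hd₂ hc, mul_left_comm] at h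
  exact lt_of_mul_lt_mul_left h (pow_pos hc 2).le

lemma tendsto_gainSqBound_atTop (hd : d ∈ Ioo (-1 : ℝ) 1) (hβ : 0 ≤ β) (hα1 : 0 < α1)
    (ha : 0 < a) (hne : ∀ u > 0, (gainSqSet d β α1 α2 a u).Nonempty) :
    Tendsto (gainSqBound d β α1 α2 a) atTop atTop := by
  -- here `-z1 + (1 + β) ⌊z2⌉^(1-d) = 0` and `δ = 0`: only the positive `α1`-term survives
  set s₁ : ℝ × ℝ × ℝ × ℝ := (1 + β, 1, -(2 + β), 0)
  have hcore : coreValue d β α1 α2 a s₁ = 2 * a * α1 * ((1 + β) ^ (1 / (1 - d)) - 1) + α1 ^ 2 := by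
    simp only [s₁, coreValue, show 1 + β + -(2 + β) = -1 by ring, neg_one_spow, one_spow,
      spow_of_pos (by linarith : (0 : ℝ) < 1 + β)]
    ring
  have hcore_pos : 0 < coreValue d β α1 α2 a s₁ := by
    have : 1 ≤ (1 + β) ^ (1 / (1 - d)) :=
      Real.one_le_rpow (by linarith) (div_nonneg zero_le_one (by linarith [hd.2]))
    rw [hcore]; nlinarith [mul_pos ha hα1]
  have hcross : crossValue d β α1 a s₁ = 0 := by simp [s₁, crossValue]
  have hN : 0 < disturbanceWeight d s₁ := by
    simp only [s₁, disturbanceWeight]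
    have : 0 < |-(2 + β)| ^ (2 / (1 - d)) := Real.rpow_pos_of_pos (by rw [abs_neg]; positivity) _
    positivity
  refine tendsto_atTop_mono' _ ?_ (tendsto_id.const_mul_atTop (div_pos hcore_pos hN))
  filter_upwards [eventually_gt_atTop 0] with u hu
  calc coreValue d β α1 α2 a s₁ / disturbanceWeight d s₁ * id u
      = (u * coreValue d β α1 α2 a s₁ + crossValue d β α1 a s₁) / disturbanceWeight d s₁ := by
        rw [hcross, id]; ring
    _ ≤ gainSqBound d β α1 α2 a u :=
        div_le_sInf_feasibleGains (hne u hu) (by simp [s₁]) hN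

lemma tendsto_gainSqBound_nhdsGT_zero (hd : d ∈ Ioo (-1 : ℝ) 1) (hβ : 0 ≤ β) (hα1 : 0 < α1)
    (ha : 0 < a) (hk : α1 ^ 2 < a * α1) (hne : ∀ u > 0, (gainSqSet d β α1 α2 a u).Nonempty) :
    Tendsto (gainSqBound d β α1 α2 a) (𝓝[>] 0) atTop := by
  set k := a * α1 - α1 ^ 2
  set q := 2 / (1 + d)
  have hk' : 0 < k := sub_pos.2 hk
  have hq : 1 - q < 0 := by
    rw [sub_neg, one_lt_div (by linarith [hd.1])]; linarith [hd.2]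
  -- at `s = (0, 1, 0, M u)` the cross term `2 k u` outweighs the core term `-k u`,
  -- leaving the bound `k u / (M u) ^ q`
  set M := 2 * k * α1 / (a * (1 + β))
  have hM : 0 < M := by positivity
  refine tendsto_atTop_mono' _ ?_
    ((tendsto_rpow_neg_nhdsGT_zero hq).const_mul_atTop (div_pos hk' (Real.rpow_pos_of_pos hM q)))
  filter_upwards [self_mem_nhdsWithin] with u (hu : 0 < u)
  set s : ℝ × ℝ × ℝ × ℝ := (0, 1, 0, M * u)
  have hcore : coreValue d β α1 α2 a s = -k := by simp [s, k, coreValue]; ring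
  have hcross : crossValue d β α1 a s = 2 * k * u := by
    simp only [s, crossValue, one_spow, M]; field_simp; ring
  have hN : disturbanceWeight d s = (M * u) ^ q := by
    have h₁ : 2 / (1 - d) ≠ 0 := div_ne_zero two_ne_zero (by linarith [hd.2])
    simp [s, disturbanceWeight, Real.zero_rpow h₁, abs_of_pos (mul_pos hM hu), q]
  calc k / M ^ q * u ^ (1 - q)
      = (u * coreValue d β α1 α2 a s + crossValue d β α1 a s) / disturbanceWeight d s := by
        rw [hcore, hcross, hN, Real.mul_rpow hM.le hu.le, Real.rpow_sub hu, Real.rpow_one]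
        field_simp; ring
    _ ≤ gainSqBound d β α1 α2 a u :=
        div_le_sInf_feasibleGains (hne u hu) (by simp [s, hM.ne', hu.ne'])
          (by rw [hN]; exact Real.rpow_pos_of_pos (mul_pos hM hu) q)

end Differentiator

theorem stmt18_general (d β α1 α2 a : ℝ) (hd : d ∈ Set.Ioo (-1:ℝ) 1) (hβ : 0 < β)
    (hα1 : 0 < α1) (ha : 0 < a)
    (hSF : ∀ z1 z2 : ℝ, (z1, z2) ≠ ((0:ℝ), (0:ℝ)) →
      α1 ^ 2 * z2 ^ 2 < a * (α1 * muF d z1 z2 - (α2 / α1) * etaF d β z1 z2)) :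
    ∃ Ls : ℝ, 0 < Ls ∧ ∀ L > (0:ℝ), Gest d β α1 α2 a Ls ≤ Gest d β α1 α2 a L := by
  have hne : ∀ u > 0, (gainSqSet d β α1 α2 a u).Nonempty := fun u hu =>
    gainSqSet_nonempty hd hSF hu
  have hk : α1 ^ 2 < a * α1 := by
    simpa [muF, etaF, Real.zero_rpow (div_ne_zero two_ne_zero (by linarith [hd.2] : 1 - d ≠ 0))]
      using hSF 0 1 (by simp)
  obtain ⟨u, hu, hmin⟩ := exists_isMinOn_Ioi_of_tendsto
    ((convexOn_sInf_feasibleGains (convex_Ioi 0) hne).continuousOn isOpen_Ioi)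
    (tendsto_gainSqBound_nhdsGT_zero hd hβ.le hα1 ha hk hne)
    (tendsto_gainSqBound_atTop hd hβ.le hα1 ha hne)
  have hLs : 0 < √u := Real.sqrt_pos.2 hu
  refine ⟨√u, hLs, fun L hL => ?_⟩
  rw [Gest_eq_sqrt_gainSqBound hLs (hne _ (pow_pos hLs 2)), Gest_eq_sqrt_gainSqBound hL
    (hne _ (pow_pos hL 2)), Real.sq_sqrt hu.le]
  exact Real.sqrt_le_sqrt (hmin (pow_pos hL 2))

/-- Existence of an optimal gain-scaling `L* > 0` that globally minimizes the
homogeneous `L₂`-gain estimate `G(L)`. -/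
theorem stmt18 (d β α1 α2 a : ℝ) (hd : d ∈ Set.Ioo (-1:ℝ) 1) (hβ : 0 < β)
    (hα1 : 0 < α1) (hα2 : 0 < α2) (ha : 0 < a)
    (hSF : ∀ z1 z2 : ℝ, (z1, z2) ≠ ((0:ℝ), (0:ℝ)) →
      α1 ^ 2 * z2 ^ 2 < a * (α1 * muF d z1 z2 - (α2 / α1) * etaF d β z1 z2)) :
    ∃ Ls : ℝ, 0 < Ls ∧ ∀ L > (0:ℝ), Gest d β α1 α2 a Ls ≤ Gest d β α1 α2 a L :=
  stmt18_general d β α1 α2 a hd hβ hα1 ha hSF
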